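/- arXiv:1208.6094 — 7 statements merged into one kernel-verified Lean document; each statement's English description precedes it below -/
import Mathlib

section
/- Let p > 17 be a prime and let {x,y,z,w} be any four distinct elements of {0,1,2,3,4}. Then (y-x)·((z-x)(w-y) + (z-y)(w-x)) ≢ 0 (mod p). That is, Assignment 1 of check labels to a (4,8) absorbing set never yields a singular cycle consistency matrix for elementary array-based codes when p > 17. -/
lemma aux_key (p : ℕ) (hp : p.Prime) (hp17 : 17 < p) (k : ℕ)
    (hk : k ∈ ({4, 5, 6, 7, 8, 10, 15, 17, 20, 21, 32, 40} : Finset ℕ)) : ¬ p ∣ k := by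
  intro h
  have hk40 : k ≤ 40 := by fin_cases hk <;> norm_num
  have hle : p ≤ 40 := le_trans (Nat.le_of_dvd (by fin_cases hk <;> norm_num) h) hk40
  interval_cases p <;> first
    | exact absurd hp (by decide)
    | (fin_cases hk <;> omega)

/-- For a prime `p > 17` and any four distinct elements `x,y,z,w` of
`{0,1,2,3,4}`, we have `(y-x)·((z-x)(w-y) + (z-y)(w-x)) ≢ 0 (mod p)`. -/
theorem assignment1_det_nonzero (p : ℕ) (hp : p.Prime) (hp17 : 17 < p)
    (x y z w : ℤ)
    (hx : x ∈ ({0, 1, 2, 3, 4} : Finset ℤ)) (hy : y ∈ ({0, 1, 2, 3, 4} : Finset ℤ))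
    (hz : z ∈ ({0, 1, 2, 3, 4} : Finset ℤ)) (hw : w ∈ ({0, 1, 2, 3, 4} : Finset ℤ))
    (hxy : x ≠ y) (hxz : x ≠ z) (hxw : x ≠ w) (hyz : y ≠ z) (hyw : y ≠ w) (hzw : z ≠ w) :
    ¬ (p : ℤ) ∣ ((y - x) * ((z - x) * (w - y) + (z - y) * (w - x))) := by
  simp only [Finset.mem_insert, Finset.mem_singleton] at hx hy hz hw
  intro h
  have hk : ((y - x) * ((z - x) * (w - y) + (z - y) * (w - x))).natAbs ∈
      ({4, 5, 6, 7, 8, 10, 15, 17, 20, 21, 32, 40} : Finset ℕ) := by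
    rcases hx with rfl|rfl|rfl|rfl|rfl <;> rcases hy with rfl|rfl|rfl|rfl|rfl <;>
    rcases hz with rfl|rfl|rfl|rfl|rfl <;> rcases hw with rfl|rfl|rfl|rfl|rfl <;>
    first | (exact absurd rfl (by assumption)) | decide
  exact aux_key p hp hp17 _ hk (by simpa using Int.natAbs_dvd_natAbs.mpr h)
end

section
/- Over any prime field GF(p), the only solutions (x,y,z,w,t) consisting of distinct elements of {0,1,2,3,4} (with p > 17) to (z-w)(x-t)(y-z) - (y-w)(x-z)(z-t) ≡ 0 (mod p) all have z = 2. Specifically, the eight solutions are (4,3,2,0,1),(4,1,2,0,3),(3,4,2,1,0),(3,0,2,1,4),(1,4,2,3,0),(1,0,2,3,4),(0,3,2,4,1),(0,1,2,4,3). -/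
set_option maxHeartbeats 2000000

private lemma aux_no_large_prime_divisor (p : ℕ) (hp : p.Prime) (hp17 : 17 < p)
    (c : ℤ) (h : (p : ℤ) ∣ c) (hne : c ≠ 0) (hb : c.natAbs ≤ 22)
    (h19 : c.natAbs ≠ 19) : False := by
  have hd : p ∣ c.natAbs := by
    rw [← Int.natAbs_natCast p]
    exact Int.natAbs_dvd_natAbs.mpr h
  have hpos : 0 < c.natAbs := Int.natAbs_pos.mpr hne
  have hle : p ≤ c.natAbs := Nat.le_of_dvd hpos hd
  have h22 : p ≤ 22 := le_trans hle hb
  interval_cases p <;>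
    first
    | (obtain ⟨k, hk⟩ := hd; omega)
    | (revert hp; decide)

/-- For a prime `p > 17`, the only tuples `(x,y,z,w,t)` of distinct elements of
`{0,1,2,3,4}` with `(z-w)(x-t)(y-z) - (y-w)(x-z)(z-t) ≡ 0 (mod p)` all have `z = 2`;
specifically they are the listed eight tuples. -/
theorem assignment2_solutions (p : ℕ) (hp : p.Prime) (hp17 : 17 < p)
    (x y z w t : ℤ)
    (hx : x ∈ ({0, 1, 2, 3, 4} : Finset ℤ)) (hy : y ∈ ({0, 1, 2, 3, 4} : Finset ℤ))
    (hz : z ∈ ({0, 1, 2, 3, 4} : Finset ℤ)) (hw : w ∈ ({0, 1, 2, 3, 4} : Finset ℤ))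
    (ht : t ∈ ({0, 1, 2, 3, 4} : Finset ℤ))
    (hxy : x ≠ y) (hxz : x ≠ z) (hxw : x ≠ w) (hxt : x ≠ t)
    (hyz : y ≠ z) (hyw : y ≠ w) (hyt : y ≠ t)
    (hzw : z ≠ w) (hzt : z ≠ t) (hwt : w ≠ t)
    (hdet : (p : ℤ) ∣ ((z - w) * (x - t) * (y - z) - (y - w) * (x - z) * (z - t))) :
    z = 2 ∧
    ((x, y, z, w, t) = ((4 : ℤ), (3 : ℤ), (2 : ℤ), (0 : ℤ), (1 : ℤ)) ∨
     (x, y, z, w, t) = ((4 : ℤ), (1 : ℤ), (2 : ℤ), (0 : ℤ), (3 : ℤ)) ∨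
     (x, y, z, w, t) = ((3 : ℤ), (4 : ℤ), (2 : ℤ), (1 : ℤ), (0 : ℤ)) ∨
     (x, y, z, w, t) = ((3 : ℤ), (0 : ℤ), (2 : ℤ), (1 : ℤ), (4 : ℤ)) ∨
     (x, y, z, w, t) = ((1 : ℤ), (4 : ℤ), (2 : ℤ), (3 : ℤ), (0 : ℤ)) ∨
     (x, y, z, w, t) = ((1 : ℤ), (0 : ℤ), (2 : ℤ), (3 : ℤ), (4 : ℤ)) ∨
     (x, y, z, w, t) = ((0 : ℤ), (3 : ℤ), (2 : ℤ), (4 : ℤ), (1 : ℤ)) ∨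
     (x, y, z, w, t) = ((0 : ℤ), (1 : ℤ), (2 : ℤ), (4 : ℤ), (3 : ℤ))) := by
  simp only [Finset.mem_insert, Finset.mem_singleton] at hx hy hz hw ht
  rcases hx with rfl | rfl | rfl | rfl | rfl <;>
    rcases hy with rfl | rfl | rfl | rfl | rfl <;>
    first
    | exact absurd rfl hxy
    | (rcases hz with rfl | rfl | rfl | rfl | rfl <;>
       first
       | exact absurd rfl hxz
       | exact absurd rfl hyz
       | (rcases hw with rfl | rfl | rfl | rfl | rfl <;>
          first
          | exact absurd rfl hxw
          | exact absurd rfl hyw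
          | exact absurd rfl hzw
          | (rcases ht with rfl | rfl | rfl | rfl | rfl <;>
             first
             | exact absurd rfl hxt
             | exact absurd rfl hyt
             | exact absurd rfl hzt
             | exact absurd rfl hwt
             | exact (aux_no_large_prime_divisor p hp hp17 _ hdet (by decide)
                 (by decide) (by decide)).elim
             | (refine ⟨rfl, ?_⟩; norm_num))))
end

section
/- In an r=5 regular code of girth 6 in which no (4,8) absorbing set exists, every (5,b) absorbing set has b ≥ 9. Proof sketch: among the 10 unordered pairs of the 5 variable nodes, absence of (4,8) absorbing sets forces at least 2 pairs to be unconnected (else some 4-subset would have all 6 pairs connected), so at most 8 pairs share satisfied checks, giving at most 16 edges to satisfied checks out of 25, hence at least 9 edges to unsatisfied checks. -/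
/-!
Let `d c` be the number of nodes of `S` on the check `c`. Counting edges gives `∑ d = 25`,
girth 6 gives `∑ d (d - 1) ≤ 20` (ordered pairs of nodes sharing a check), and absorption gives
`∑_{d even} d ≥ 15`; together these force `d ≤ 2` everywhere. Then
`b + #{ordered pairs of S sharing a check} = 25`, so `b ≤ 8` leaves at most one unordered pair
of `S` without a common check. Removing one node of that pair leaves four nodes that pairwise
share a check of degree 2, and such a configuration is a (4,8) absorbing set.
-/

open Finset

/-- Degree of check node `c` within the variable-node set `S` (neighborhoods given by `N`). -/
def chkDeg {V C : Type*} [DecidableEq C] (N : V → Finset C) (S : Finset V) (c : C) : ℕ :=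
  (S.filter fun v => c ∈ N v).card

/-- The unsatisfied (odd-degree) neighboring check nodes of the set `S`. -/
def oddChecks {V C : Type*} [DecidableEq C] (N : V → Finset C) (S : Finset V) : Finset C :=
  (S.biUnion N).filter fun c => chkDeg N S c % 2 = 1

/-- `S` is an absorbing set: each of its variable nodes has strictly fewer odd-degree
(unsatisfied) than even-degree (satisfied) neighboring check nodes. -/
def isAbsorbing {V C : Type*} [DecidableEq C] (N : V → Finset C) (S : Finset V) : Prop :=
  ∀ v ∈ S, ((N v).filter fun c => chkDeg N S c % 2 = 1).card <
    ((N v).filter fun c => chkDeg N S c % 2 = 0).card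

/-- Counts ordered pairs: fewer than four means at most one unordered pair is unrelated. -/
theorem Finset.exists_pairwise_erase_of_card_filter_not_lt_four {α : Type*} [DecidableEq α]
    {r : α → α → Prop} [DecidableRel r] (hr : ∀ x y, r x y → r y x) {s : Finset α}
    (hs : s.Nonempty) (h : (s.offDiag.filter fun q => ¬ r q.1 q.2).card < 4) :
    ∃ a ∈ s, (s.erase a : Set α).Pairwise r := by
  by_contra! hbad
  simp only [Set.Pairwise, coe_erase, Set.mem_sdiff, mem_coe, Set.mem_singleton_iff] at hbad
  push Not at hbad
  have hbad' : ∀ a ∈ s, ∃ x ∈ s, ∃ y ∈ s, x ≠ a ∧ y ≠ a ∧ x ≠ y ∧ ¬ r x y := by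
    intro a ha
    obtain ⟨x, ⟨hx, hxa⟩, y, ⟨hy, hya⟩, hxy, hr⟩ := hbad a ha
    exact ⟨x, hx, y, hy, hxa, hya, hxy, hr⟩
  obtain ⟨a₀, ha₀⟩ := hs
  obtain ⟨a, ha, b, hb, -, -, hab, hrab⟩ := hbad' a₀ ha₀
  obtain ⟨x, hx, y, hy, hxa, hya, hxy, hrxy⟩ := hbad' a ha
  have hrba : ¬ r b a := fun h => hrab (hr _ _ h)
  have hryx : ¬ r y x := fun h => hrxy (hr _ _ h)
  have hfour : ({(a, b), (b, a), (x, y), (y, x)} : Finset (α × α)).card = 4 :=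
    card_eq_four.2 ⟨_, _, _, _, by simp [hab], by simp [hxa.symm],
      by simp [hya.symm], by simp [hya.symm], by simp [hxa.symm], by simp [hxy], rfl⟩
  refine h.not_ge (hfour ▸ card_le_card fun q hq => ?_)
  simp only [mem_insert, mem_singleton] at hq
  rcases hq with rfl | rfl | rfl | rfl <;> simp [*, hab.symm, hxy.symm]

section
variable {V C : Type*} [DecidableEq C] (N : V → Finset C)

theorem sum_chkDeg_eq_sum_card_filter (S : Finset V) (p : C → Prop) [DecidablePred p] :
    ∑ c ∈ (S.biUnion N).filter p, chkDeg N S c = ∑ v ∈ S, ((N v).filter p).card := by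
  calc ∑ c ∈ (S.biUnion N).filter p, chkDeg N S c
      = ∑ c ∈ (S.biUnion N).filter p, (S.bipartiteBelow (fun v c => c ∈ N v) c).card := rfl
    _ = ∑ v ∈ S, (((S.biUnion N).filter p).bipartiteAbove (fun v c => c ∈ N v) v).card :=
        (sum_card_bipartiteAbove_eq_sum_card_bipartiteBelow _).symm
    _ = ∑ v ∈ S, ((N v).filter p).card := sum_congr rfl fun v hv => congrArg card ?_
  ext c
  simp only [bipartiteAbove, mem_filter, mem_biUnion]
  exact ⟨fun h => ⟨h.2, h.1.2⟩, fun h => ⟨⟨⟨v, hv, h.1⟩, h.2⟩, h.1⟩⟩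

theorem sum_chkDeg_mul_pred_eq_sum_card_inter (S : Finset V) :
    ∑ c ∈ S.biUnion N, chkDeg N S c * (chkDeg N S c - 1)
      = ∑ q ∈ S.offDiag, (N q.1 ∩ N q.2).card := by
  let r : V × V → C → Prop := fun q c => c ∈ N q.1 ∧ c ∈ N q.2
  calc ∑ c ∈ S.biUnion N, chkDeg N S c * (chkDeg N S c - 1)
      = ∑ c ∈ S.biUnion N, (S.offDiag.bipartiteBelow r c).card := by
        refine sum_congr rfl fun c _ => ?_
        rw [chkDeg, Nat.mul_sub_one, ← offDiag_card]
        congr 1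
        ext ⟨v, w⟩
        simp only [r, bipartiteBelow, mem_filter, mem_offDiag]
        tauto
    _ = ∑ q ∈ S.offDiag, ((S.biUnion N).bipartiteAbove r q).card :=
        (sum_card_bipartiteAbove_eq_sum_card_bipartiteBelow _).symm
    _ = ∑ q ∈ S.offDiag, (N q.1 ∩ N q.2).card := sum_congr rfl fun q hq => congrArg card ?_
  ext c
  simp only [r, bipartiteAbove, mem_filter, mem_biUnion, mem_inter]
  exact ⟨fun h => h.2, fun h => ⟨⟨q.1, (mem_offDiag.1 hq).1, h.1⟩, h⟩⟩

theorem chkDeg_mono {T S : Finset V} (h : T ⊆ S) (c : C) : chkDeg N T c ≤ chkDeg N S c :=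
  card_le_card (filter_subset_filter _ h)

theorem chkDeg_pos {S : Finset V} {v : V} {c : C} (hv : v ∈ S) (hc : c ∈ N v) :
    0 < chkDeg N S c :=
  card_pos.2 ⟨v, mem_filter.2 ⟨hv, hc⟩⟩

theorem card_filter_odd_add_card_filter_even (S : Finset V) (v : V) :
    ((N v).filter fun c => chkDeg N S c % 2 = 1).card
      + ((N v).filter fun c => chkDeg N S c % 2 = 0).card = (N v).card := by
  rw [← card_filter_add_card_filter_not (s := N v) (fun c => chkDeg N S c % 2 = 1)]
  congr 2
  exact filter_congr fun c _ => by omega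

theorem card_filter_even_chkDeg_eq_sum_card_inter [DecidableEq V] {T : Finset V}
    (hdeg : ∀ c, chkDeg N T c ≤ 2) {v : V} (hv : v ∈ T) :
    ((N v).filter fun c => chkDeg N T c % 2 = 0).card = ∑ w ∈ T.erase v, (N v ∩ N w).card := by
  calc ((N v).filter fun c => chkDeg N T c % 2 = 0).card
      = ∑ c ∈ N v, (chkDeg N T c - 1) := by
        rw [card_filter]
        refine sum_congr rfl fun c hc => ?_
        have := chkDeg_pos N hv hc
        have := hdeg c
        split_ifs <;> omega
    _ = ∑ c ∈ N v, ((T.erase v).bipartiteBelow (fun w c => c ∈ N w) c).card := by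
        refine sum_congr rfl fun c hc => ?_
        rw [bipartiteBelow, filter_erase, card_erase_of_mem (mem_filter.2 ⟨hv, hc⟩), chkDeg]
    _ = ∑ w ∈ T.erase v, ((N v).bipartiteAbove (fun w c => c ∈ N w) w).card :=
        (sum_card_bipartiteAbove_eq_sum_card_bipartiteBelow _).symm
    _ = ∑ w ∈ T.erase v, (N v ∩ N w).card := by
        simp only [bipartiteAbove, filter_mem_eq_inter]

theorem card_oddChecks_add_sum_card_inter (S : Finset V) (hdeg : ∀ c, chkDeg N S c ≤ 2) :
    (oddChecks N S).card + ∑ q ∈ S.offDiag, (N q.1 ∩ N q.2).card = ∑ v ∈ S, (N v).card := by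
  have hsum := sum_chkDeg_eq_sum_card_filter N S fun _ => True
  simp only [filter_true] at hsum
  rw [← hsum, ← sum_chkDeg_mul_pred_eq_sum_card_inter, oddChecks, card_filter, ← sum_add_distrib]
  refine sum_congr rfl fun c hc => ?_
  obtain ⟨v, hv, hcv⟩ := mem_biUnion.1 hc
  have := chkDeg_pos N hv hcv
  have := hdeg c
  interval_cases chkDeg N S c <;> rfl

theorem sum_card_inter_le_card_filter_nonempty {s : Finset (V × V)}
    (hgirth : ∀ v w : V, v ≠ w → (N v ∩ N w).card ≤ 1) (hs : ∀ q ∈ s, q.1 ≠ q.2) :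
    ∑ q ∈ s, (N q.1 ∩ N q.2).card ≤ (s.filter fun q => (N q.1 ∩ N q.2).Nonempty).card := by
  rw [card_filter]
  refine sum_le_sum fun q hq => ?_
  split_ifs with h
  · exact hgirth _ _ (hs q hq)
  · simp [not_nonempty_iff_eq_empty.1 h]

theorem chkDeg_le_two_of_isAbsorbing (hreg : ∀ v, (N v).card = 5)
    (hgirth : ∀ v w : V, v ≠ w → (N v ∩ N w).card ≤ 1) {S : Finset V} (hS : S.card = 5)
    (habs : isAbsorbing N S) (c : C) : chkDeg N S c ≤ 2 := by
  by_contra! hc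
  have hcA : c ∈ S.biUnion N := by
    obtain ⟨v, hv⟩ := card_pos.1 (zero_lt_two.trans hc)
    exact mem_biUnion.2 ⟨v, (mem_filter.1 hv).1, (mem_filter.1 hv).2⟩
  have heven : 15 ≤ ∑ c ∈ S.biUnion N, if chkDeg N S c % 2 = 0 then chkDeg N S c else 0 := by
    rw [← sum_filter, sum_chkDeg_eq_sum_card_filter]
    calc 15 = ∑ _v ∈ S, 3 := by simp [hS]
      _ ≤ _ := sum_le_sum fun v hv => ?_
    have := habs v hv
    have := card_filter_odd_add_card_filter_even N S v
    rw [hreg] at this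
    omega
  have hpairs : ∑ c ∈ S.biUnion N, chkDeg N S c * (chkDeg N S c - 1) ≤ 20 := by
    rw [sum_chkDeg_mul_pred_eq_sum_card_inter]
    calc ∑ q ∈ S.offDiag, (N q.1 ∩ N q.2).card
        ≤ S.offDiag.card := card_eq_sum_ones S.offDiag ▸
          sum_le_sum fun q hq => hgirth _ _ (mem_offDiag.1 hq).2.2
      _ = 20 := by rw [offDiag_card, hS]
  have hpoint : ∀ k, (if k % 2 = 0 then k else 0) + (if 3 ≤ k then 6 else 0) ≤ k * (k - 1) := by
    intro k
    rcases k with _ | _ | _ | _ | k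
    iterate 4 simp
    rw [show k + 4 - 1 = k + 3 from rfl]
    split_ifs <;> nlinarith
  have hlarge : 6 ≤ ∑ c ∈ S.biUnion N, if 3 ≤ chkDeg N S c then 6 else 0 :=
    le_of_eq_of_le (if_pos hc).symm
      (single_le_sum (f := fun c => if 3 ≤ chkDeg N S c then 6 else 0) (fun _ _ => zero_le) hcA)
  have := sum_le_sum fun c (_ : c ∈ S.biUnion N) => hpoint (chkDeg N S c)
  rw [sum_add_distrib] at this
  omega

theorem card_inter_eq_one_of_pairwise (hgirth : ∀ v w : V, v ≠ w → (N v ∩ N w).card ≤ 1)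
    {T : Finset V} (hpair : (T : Set V).Pairwise fun v w => (N v ∩ N w).Nonempty) {v w : V}
    (hv : v ∈ T) (hw : w ∈ T) (hvw : v ≠ w) : (N v ∩ N w).card = 1 :=
  le_antisymm (hgirth v w hvw) (card_pos.2 (hpair hv hw hvw))

theorem card_filter_even_chkDeg_of_pairwise [DecidableEq V] {T : Finset V}
    (hgirth : ∀ v w : V, v ≠ w → (N v ∩ N w).card ≤ 1)
    (hpair : (T : Set V).Pairwise fun v w => (N v ∩ N w).Nonempty) (hdeg : ∀ c, chkDeg N T c ≤ 2)
    {v : V} (hv : v ∈ T) :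
    ((N v).filter fun c => chkDeg N T c % 2 = 0).card = T.card - 1 := by
  rw [card_filter_even_chkDeg_eq_sum_card_inter N hdeg hv, ← card_erase_of_mem hv,
    card_eq_sum_ones]
  refine sum_congr rfl fun w hw => ?_
  obtain ⟨hwv, hw⟩ := mem_erase.1 hw
  exact card_inter_eq_one_of_pairwise N hgirth hpair hv hw hwv.symm

theorem isAbsorbing_of_pairwise [DecidableEq V] {T : Finset V}
    (hgirth : ∀ v w : V, v ≠ w → (N v ∩ N w).card ≤ 1)
    (hpair : (T : Set V).Pairwise fun v w => (N v ∩ N w).Nonempty) (hdeg : ∀ c, chkDeg N T c ≤ 2)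
    {r : ℕ} (hreg : ∀ v, (N v).card = r) (hr : r + 2 < 2 * T.card) : isAbsorbing N T := by
  intro v hv
  have := card_filter_odd_add_card_filter_even N T v
  rw [card_filter_even_chkDeg_of_pairwise N hgirth hpair hdeg hv, hreg] at *
  omega

theorem card_oddChecks_of_pairwise {T : Finset V}
    (hgirth : ∀ v w : V, v ≠ w → (N v ∩ N w).card ≤ 1)
    (hpair : (T : Set V).Pairwise fun v w => (N v ∩ N w).Nonempty) (hdeg : ∀ c, chkDeg N T c ≤ 2)
    {r : ℕ} (hreg : ∀ v, (N v).card = r) :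
    (oddChecks N T).card + T.card * (T.card - 1) = T.card * r := by
  have hpairs : ∑ q ∈ T.offDiag, (N q.1 ∩ N q.2).card = T.card * (T.card - 1) := by
    rw [Nat.mul_sub_one, ← offDiag_card, card_eq_sum_ones]
    refine sum_congr rfl fun q hq => ?_
    obtain ⟨hq₁, hq₂, hne⟩ := mem_offDiag.1 hq
    exact card_inter_eq_one_of_pairwise N hgirth hpair hq₁ hq₂ hne
  have := card_oddChecks_add_sum_card_inter N T hdeg
  rwa [hpairs, sum_congr rfl fun v _ => hreg v, sum_const, smul_eq_mul] at this

end

/-- In an `r = 5` regular code of girth 6 with no (4,8) absorbing set,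
every `(5,b)` absorbing set has `b ≥ 9`. -/
theorem five_b_absorbing_ge_nine {V C : Type*} [DecidableEq V] [DecidableEq C]
    (N : V → Finset C)
    (hreg : ∀ v, (N v).card = 5)
    (hgirth : ∀ v w : V, v ≠ w → (N v ∩ N w).card ≤ 1)
    (h48 : ¬ ∃ T : Finset V, T.card = 4 ∧ isAbsorbing N T ∧ (oddChecks N T).card = 8)
    (S : Finset V) (hS : S.card = 5) (habs : isAbsorbing N S) :
    9 ≤ (oddChecks N S).card := by
  have hdeg := chkDeg_le_two_of_isAbsorbing N hreg hgirth hS habs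
  have hcount := card_oddChecks_add_sum_card_inter N S hdeg
  rw [sum_congr rfl fun v _ => hreg v, sum_const, hS, smul_eq_mul] at hcount
  have hshared := sum_card_inter_le_card_filter_nonempty N (s := S.offDiag) hgirth
    fun q hq => (mem_offDiag.1 hq).2.2
  have hsplit := card_filter_add_card_filter_not (s := S.offDiag)
    fun q => (N q.1 ∩ N q.2).Nonempty
  rw [offDiag_card, hS] at hsplit
  by_contra! hlt
  obtain ⟨v₀, hv₀, hpair⟩ := S.exists_pairwise_erase_of_card_filter_not_lt_four
    (r := fun v w => (N v ∩ N w).Nonempty) (fun v w h => by rwa [inter_comm])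
    (card_pos.1 (by omega)) (by omega)
  have hcard : (S.erase v₀).card = 4 := by rw [card_erase_of_mem hv₀, hS]
  have hdeg' c := (chkDeg_mono N (erase_subset v₀ S) c).trans (hdeg c)
  have hodd := card_oddChecks_of_pairwise N hgirth hpair hdeg' hreg
  rw [hcard] at hodd
  exact h48 ⟨S.erase v₀, hcard, isAbsorbing_of_pairwise N hgirth hpair hdeg' hreg (by omega),
    by omega⟩
end

section
/- In an r=5 regular code of girth 6, a (5,9) absorbing set cannot contain a (4,8) absorbing set as a subgraph: if variable nodes v1,...,v4 formed a (4,8) absorbing set, any fifth variable node v5 connecting to a satisfied check of the (4,8) set would create a length-4 cycle or violate the absorbing property, and v5 connecting only to formerly unsatisfied checks would reduce the unsatisfied check count below 9. -/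
open Finset

/-- In an `r = 5` regular code of girth 6, a (5,9) absorbing set cannot contain
a (4,8) absorbing set as a subgraph. -/
theorem five_nine_no_48_subgraph {V C : Type*} [DecidableEq V] [DecidableEq C]
    (N : V → Finset C)
    (hreg : ∀ v, (N v).card = 5)
    (hgirth : ∀ v w : V, v ≠ w → (N v ∩ N w).card ≤ 1)
    (S : Finset V) (hS : S.card = 5) (habs : isAbsorbing N S)
    (hodd : (oddChecks N S).card = 9) :
    ¬ ∃ T ⊆ S, T.card = 4 ∧ isAbsorbing N T ∧ (oddChecks N T).card = 8 := by
  rintro ⟨T, hTS, hT4, -, hoddT⟩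
  obtain ⟨v5, hv5S, hv5T⟩ : ∃ v ∈ S, v ∉ T := by
    by_contra h
    push_neg at h
    have := Finset.card_le_card (fun v hv => h v hv)
    omega
  have hins : (insert v5 T).card = 5 := by
    rw [Finset.card_insert_of_notMem hv5T, hT4]
  have hSeq : S = insert v5 T := by
    refine (Finset.eq_of_subset_of_card_le ?_ ?_).symm
    · intro x hx
      rcases Finset.mem_insert.mp hx with h | h
      · exact h ▸ hv5S
      · exact hTS h
    · rw [hins, hS]
  have hdeg : ∀ c, chkDeg N S c = chkDeg N T c + (if c ∈ N v5 then 1 else 0) := by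
    intro c
    unfold chkDeg
    rw [hSeq, Finset.filter_insert]
    split_ifs with h
    · rw [Finset.card_insert_of_notMem (fun hmem => hv5T (Finset.mem_filter.mp hmem).1)]
    · simp
  set a := ((N v5).filter fun c => chkDeg N T c % 2 = 1).card with ha
  set b := ((N v5).filter fun c => chkDeg N T c % 2 = 0).card with hb
  have hab : a + b = 5 := by
    have h := Finset.card_filter_add_card_filter_not (s := N v5)
      (p := fun c => chkDeg N T c % 2 = 1)
    have he : (N v5).filter (fun c => ¬ chkDeg N T c % 2 = 1)
        = (N v5).filter fun c => chkDeg N T c % 2 = 0 :=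
      Finset.filter_congr (fun c _ => by omega)
    rw [he, hreg v5] at h
    omega
  have hodd5 : ((N v5).filter fun c => chkDeg N S c % 2 = 1)
      = ((N v5).filter fun c => chkDeg N T c % 2 = 0) := by
    apply Finset.filter_congr
    intro c hc
    have hd := hdeg c
    rw [if_pos hc] at hd
    omega
  have heven5 : ((N v5).filter fun c => chkDeg N S c % 2 = 0)
      = ((N v5).filter fun c => chkDeg N T c % 2 = 1) := by
    apply Finset.filter_congr
    intro c hc
    have hd := hdeg c
    rw [if_pos hc] at hd
    omega
  have hba : b < a := by
    have h := habs v5 hv5S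
    rw [hodd5, heven5] at h
    exact h
  have hmemT : ∀ c, chkDeg N T c % 2 = 1 → c ∈ T.biUnion N := by
    intro c hc
    have hpos : 0 < chkDeg N T c := by omega
    obtain ⟨v, hv⟩ := Finset.card_pos.mp hpos
    rw [Finset.mem_filter] at hv
    exact Finset.mem_biUnion.mpr ⟨v, hv.1, hv.2⟩
  have hsplit : oddChecks N S
      = ((oddChecks N T) \ (N v5)) ∪ ((N v5).filter fun c => chkDeg N T c % 2 = 0) := by
    ext c
    have hSbi : c ∈ S.biUnion N ↔ c ∈ N v5 ∨ c ∈ T.biUnion N := by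
      rw [hSeq, Finset.biUnion_insert, Finset.mem_union]
    simp only [oddChecks, Finset.mem_filter, Finset.mem_union, Finset.mem_sdiff, hSbi]
    by_cases hc : c ∈ N v5
    · have hd := hdeg c
      rw [if_pos hc] at hd
      constructor
      · rintro ⟨-, hp⟩
        exact Or.inr ⟨hc, by omega⟩
      · rintro (⟨-, hnot⟩ | ⟨-, hp⟩)
        · exact absurd hc hnot
        · exact ⟨Or.inl hc, by omega⟩
    · have hd := hdeg c
      rw [if_neg hc] at hd
      constructor
      · rintro ⟨hm, hp⟩
        rcases hm with h | h
        · exact absurd h hc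
        · exact Or.inl ⟨⟨h, by omega⟩, hc⟩
      · rintro (⟨⟨hm, hp⟩, -⟩ | ⟨hcm, -⟩)
        · exact ⟨Or.inr hm, by omega⟩
        · exact absurd hcm hc
  have hdisj : Disjoint ((oddChecks N T) \ (N v5))
      ((N v5).filter fun c => chkDeg N T c % 2 = 0) := by
    apply Finset.disjoint_left.mpr
    intro c hc1 hc2
    exact (Finset.mem_sdiff.mp hc1).2 (Finset.mem_filter.mp hc2).1
  have hcard : (oddChecks N S).card = ((oddChecks N T) \ (N v5)).card + b := by
    rw [hsplit, Finset.card_union_of_disjoint hdisj]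
  have hinter : oddChecks N T ∩ N v5 = (N v5).filter fun c => chkDeg N T c % 2 = 1 := by
    ext c
    simp only [Finset.mem_inter, oddChecks, Finset.mem_filter]
    constructor
    · rintro ⟨⟨-, hp⟩, hc⟩
      exact ⟨hc, hp⟩
    · rintro ⟨hc, hp⟩
      exact ⟨⟨hmemT c hp, hp⟩, hc⟩
  have hsd : ((oddChecks N T) \ (N v5)).card + a = 8 := by
    rw [ha, ← hinter, Finset.card_sdiff_add_card_inter, hoddT]
  omega
end

section
/- In an r=5 regular code of girth 6, any (6,8) absorbing set containing a check node of degree greater than 2 (within the absorbing set subgraph) must contain a (4,8) absorbing set as a subgraph. -/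
open Finset

/-!
Let `d c` be the degree of the check `c` within `S` and `U` the number of ordered pairs of
distinct variable nodes of `S` without a common check. Double counting gives `∑ d c = 30` and,
since two nodes share at most one check, `∑ d c ^ 2 = 30 + (30 - U)`; moreover exactly eight
`d c` are odd. Hence `∑ ((d c - 1) ^ 2 - [d c even]) + U = 8`, where a check of degree 3 costs 4,
one of degree 4 costs 8 and one of higher degree more than 8. So the checks of degree > 2 are a
single one of degree 4 with `U = 0`, two of degree 3 with `U = 0`, or one of degree 3 with two
unordered uncovered pairs. In each case one can delete two nodes of `S` meeting every uncovered
pair so that no check keeps degree > 2. The four remaining nodes pairwise share exactly one check,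
of degree 2, so each has three satisfied and two unsatisfied checks: a (4,8) absorbing set.
-/

namespace AbsorbingSet

variable {V C : Type*} [DecidableEq C] {N : V → Finset C}

theorem chkDeg_pos {T : Finset V} {v : V} {c : C} (hv : v ∈ T) (hc : c ∈ N v) :
    0 < chkDeg N T c :=
  card_pos.mpr ⟨v, mem_filter.mpr ⟨hv, hc⟩⟩

theorem sum_chkDeg_mul (S : Finset V) (f : C → ℕ) :
    ∑ c ∈ S.biUnion N, chkDeg N S c * f c = ∑ v ∈ S, ∑ c ∈ N v, f c := by
  simp only [chkDeg, card_filter, sum_mul, ite_mul, one_mul, zero_mul]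
  rw [sum_comm]
  refine sum_congr rfl fun v hv => ?_
  rw [sum_ite_mem, inter_eq_right.mpr (subset_biUnion_of_mem N hv)]

theorem sum_chkDeg_eq_sum_card_inter (S : Finset V) (v : V) :
    ∑ c ∈ N v, chkDeg N S c = ∑ w ∈ S, (N v ∩ N w).card := by
  simp only [chkDeg, card_filter]
  rw [sum_comm]
  simp only [sum_boole, Nat.cast_id, filter_mem_eq_inter]

theorem sum_chkDeg_mul_chkDeg (S : Finset V) :
    ∑ c ∈ S.biUnion N, chkDeg N S c * chkDeg N S c = ∑ v ∈ S, ∑ w ∈ S, (N v ∩ N w).card := by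
  rw [sum_chkDeg_mul]
  exact sum_congr rfl fun v _ => sum_chkDeg_eq_sum_card_inter S v

def uncoveredPairs [DecidableEq V] (N : V → Finset C) (S : Finset V) : Finset (V × V) :=
  S.offDiag.filter fun p => Disjoint (N p.1) (N p.2)

theorem uncoveredPairs_swap [DecidableEq V] {S : Finset V} {p : V × V}
    (hp : p ∈ uncoveredPairs N S) :
    p.swap ∈ uncoveredPairs N S := by
  rw [uncoveredPairs, mem_filter, mem_offDiag] at hp ⊢
  exact ⟨⟨hp.1.2.1, hp.1.1, hp.1.2.2.symm⟩, hp.2.symm⟩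

theorem sum_chkDeg_mul_chkDeg_add_card_uncoveredPairs [DecidableEq V]
    (hgirth : ∀ v w : V, v ≠ w → (N v ∩ N w).card ≤ 1) (S : Finset V) :
    ∑ c ∈ S.biUnion N, chkDeg N S c * chkDeg N S c + (uncoveredPairs N S).card =
      ∑ v ∈ S, (N v).card + (S.card * S.card - S.card) := by
  have hoff : ∀ p ∈ S.offDiag,
      (N p.1 ∩ N p.2).card + (if Disjoint (N p.1) (N p.2) then 1 else 0) = 1 := by
    intro p hp
    have := hgirth p.1 p.2 (mem_offDiag.mp hp).2.2
    split_ifs with h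
    · simp [disjoint_iff_inter_eq_empty.mp h]
    · rw [disjoint_iff_inter_eq_empty, ← ne_eq, ← nonempty_iff_ne_empty, ← card_pos] at h
      omega
  rw [sum_chkDeg_mul_chkDeg, ← sum_product (f := fun p => (N p.1 ∩ N p.2).card),
    ← diag_union_offDiag, sum_union (disjoint_diag_offDiag S), uncoveredPairs, card_filter,
    add_assoc, ← sum_add_distrib, sum_congr rfl hoff, sum_const, smul_eq_mul, mul_one,
    offDiag_card]
  simp [diag, Function.diag]

/-- `(d - 1) ^ 2 - [d even]`, the cost of a check of degree `d` in
`sum_excess_add_card_uncoveredPairs`; it vanishes exactly for `d ≤ 2`. -/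
def excess (d : ℕ) : ℕ := d * d + d % 2 - 2 * d

theorem excess_add_two_mul (d : ℕ) : excess d + 2 * d = d * d + d % 2 := by
  refine Nat.sub_add_cancel ?_
  rcases d with _ | _ | d
  · simp
  · simp
  · have := Nat.mul_le_mul_right (d + 1 + 1) (show 2 ≤ d + 1 + 1 by omega)
    omega

theorem excess_cases (d : ℕ) :
    d ≤ 2 ∧ excess d = 0 ∨ d = 3 ∧ excess d = 4 ∨ d = 4 ∧ excess d = 8 ∨
      5 ≤ d ∧ 15 ≤ excess d := by
  match d with
  | 0 | 1 | 2 | 3 | 4 => decide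
  | d + 5 =>
    refine Or.inr (Or.inr (Or.inr ?_))
    have := excess_add_two_mul (d + 5)
    have : (d + 5) * (d + 5) = d * d + 10 * d + 25 := by ring
    exact ⟨by omega, by omega⟩

theorem sum_chkDeg (S : Finset V) {r : ℕ} (hreg : ∀ v ∈ S, (N v).card = r) :
    ∑ c ∈ S.biUnion N, chkDeg N S c = S.card * r := by
  have := sum_chkDeg_mul (N := N) S fun _ => 1
  simp only [mul_one, sum_const, smul_eq_mul] at this
  rw [this, sum_congr rfl hreg, sum_const, smul_eq_mul]

theorem sum_chkDeg_mod_two (S : Finset V) :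
    ∑ c ∈ S.biUnion N, chkDeg N S c % 2 = (oddChecks N S).card := by
  rw [oddChecks, card_filter]
  refine sum_congr rfl fun c _ => ?_
  rcases Nat.mod_two_eq_zero_or_one (chkDeg N S c) with h | h <;> simp [h]

theorem card_oddChecks_eq_sum {T : Finset V} (hdeg : ∀ c ∈ T.biUnion N, chkDeg N T c ≤ 2) :
    (oddChecks N T).card = ∑ v ∈ T, ((N v).filter fun c => chkDeg N T c % 2 = 1).card := by
  have := sum_chkDeg_mul (N := N) T fun c => if chkDeg N T c % 2 = 1 then 1 else 0
  simp only [sum_boole, Nat.cast_id] at this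
  rw [← this, oddChecks, card_filter]
  refine sum_congr rfl fun c hc => ?_
  obtain ⟨v, hv, hcv⟩ := mem_biUnion.mp hc
  have := chkDeg_pos hv hcv
  have := hdeg c hc
  split_ifs <;> omega

theorem sum_excess_add_card_uncoveredPairs [DecidableEq V] {r : ℕ} {S : Finset V}
    (hreg : ∀ v ∈ S, (N v).card = r) (hgirth : ∀ v w : V, v ≠ w → (N v ∩ N w).card ≤ 1) :
    ∑ c ∈ S.biUnion N, excess (chkDeg N S c) + (uncoveredPairs N S).card + S.card * r =
      (oddChecks N S).card + (S.card * S.card - S.card) := by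
  have hsq := sum_chkDeg_mul_chkDeg_add_card_uncoveredPairs hgirth S
  rw [sum_congr rfl hreg, sum_const, smul_eq_mul] at hsq
  have hpt := sum_congr rfl fun c (_ : c ∈ S.biUnion N) => excess_add_two_mul (chkDeg N S c)
  rw [sum_add_distrib, sum_add_distrib, ← mul_sum, sum_chkDeg S hreg, sum_chkDeg_mod_two] at hpt
  omega

theorem high_degree_cases {ι : Type*} [DecidableEq ι] {X : Finset ι} {d : ι → ℕ} {U : ℕ}
    (hsum : ∑ i ∈ X, excess (d i) + U = 8) {i₀ : ι} (hi₀ : i₀ ∈ X) (h₀ : 3 ≤ d i₀) :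
    (d i₀ = 4 ∧ U = 0 ∧ ∀ i ∈ X, i ≠ i₀ → d i ≤ 2) ∨
    (d i₀ = 3 ∧ U = 4 ∧ ∀ i ∈ X, i ≠ i₀ → d i ≤ 2) ∨
    (∃ i₁, d i₀ = 3 ∧ d i₁ = 3 ∧ U = 0 ∧ ∀ i ∈ X, i ≠ i₀ → i ≠ i₁ → d i ≤ 2) := by
  by_cases hrest : ∀ i ∈ X, i ≠ i₀ → d i ≤ 2
  · have hsingle : ∑ i ∈ X, excess (d i) = excess (d i₀) :=
      sum_eq_single_of_mem i₀ hi₀ fun i hi hne => by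
        have := hrest i hi hne
        rcases excess_cases (d i) with h | h | h | h <;> omega
    rcases excess_cases (d i₀) with h | h | h | h
    · omega
    · exact Or.inr (Or.inl ⟨h.1, by omega, hrest⟩)
    · exact Or.inl ⟨h.1, by omega, hrest⟩
    · omega
  · push Not at hrest
    obtain ⟨i₁, hi₁, hne, h₁⟩ := hrest
    have hpair := add_le_sum (f := fun i => excess (d i)) (fun _ _ => Nat.zero_le _) hi₀ hi₁
      hne.symm
    refine Or.inr (Or.inr ⟨i₁, ?_⟩)
    rcases excess_cases (d i₀) with h | h | h | h <;>
      rcases excess_cases (d i₁) with h' | h' | h' | h' <;> try omega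
    refine ⟨h.1, h'.1, by omega, fun i hi hi₀' hi₁' => ?_⟩
    have htriple := sum_le_sum_of_subset (f := fun i => excess (d i))
      (show {i₀, i₁, i} ⊆ X by simp [insert_subset_iff, hi₀, hi₁, hi])
    rw [sum_insert (by simp [hne.symm, hi₀'.symm]), sum_pair hi₁'.symm] at htriple
    rcases excess_cases (d i) with h'' | h'' | h'' | h'' <;> omega

section Transversal

variable {α : Type*} [DecidableEq α] {S : Finset α}

theorem exists_pair_meets_three {X Y Z : Finset α} (hXS : X ⊆ S) (hYS : Y ⊆ S) (hZS : Z ⊆ S)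
    (hX : 2 ≤ X.card) (hY : Y.Nonempty) (hZ : Z.Nonempty)
    (hcard : S.card < X.card + Y.card + Z.card) :
    ∃ R ⊆ S, R.card = 2 ∧ (X ∩ R).Nonempty ∧ (Y ∩ R).Nonempty ∧ (Z ∩ R).Nonempty := by
  have pair_of {x y : α} (hx : x ∈ S) (hy : y ∈ S) (hxy : x ≠ y) :
      ∃ R ⊆ S, R.card = 2 ∧ x ∈ R ∧ y ∈ R :=
    ⟨{x, y}, by simp [insert_subset_iff, hx, hy], card_pair hxy, by simp, by simp⟩
  by_cases hYZ : (Y ∩ Z).Nonempty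
  · obtain ⟨x, hx⟩ := hYZ
    rw [mem_inter] at hx
    obtain ⟨y, hy⟩ : (X.erase x).Nonempty := by
      rw [← card_pos, card_erase_eq_ite]; split_ifs <;> omega
    obtain ⟨R, hRS, hR, hxR, hyR⟩ :=
      pair_of (hYS hx.1) (hXS (mem_of_mem_erase hy)) (ne_of_mem_erase hy).symm
    exact ⟨R, hRS, hR, ⟨y, mem_inter.mpr ⟨mem_of_mem_erase hy, hyR⟩⟩,
      ⟨x, mem_inter.mpr ⟨hx.1, hxR⟩⟩, ⟨x, mem_inter.mpr ⟨hx.2, hxR⟩⟩⟩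
  · have hdisj : Disjoint Y Z :=
      disjoint_iff_inter_eq_empty.mpr (not_nonempty_iff_eq_empty.mp hYZ)
    obtain ⟨x, hx⟩ := inter_nonempty_of_card_lt_card_add_card hXS (union_subset hYS hZS)
      (by rw [card_union_of_disjoint hdisj]; omega)
    rw [mem_inter, mem_union] at hx
    rcases hx with ⟨hxX, hxY | hxZ⟩
    · obtain ⟨z, hz⟩ := hZ
      obtain ⟨R, hRS, hR, hxR, hzR⟩ :=
        pair_of (hXS hxX) (hZS hz) fun h => disjoint_left.mp hdisj hxY (h ▸ hz)
      exact ⟨R, hRS, hR, ⟨x, mem_inter.mpr ⟨hxX, hxR⟩⟩, ⟨x, mem_inter.mpr ⟨hxY, hxR⟩⟩,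
        ⟨z, mem_inter.mpr ⟨hz, hzR⟩⟩⟩
    · obtain ⟨y, hy⟩ := hY
      obtain ⟨R, hRS, hR, hxR, hyR⟩ :=
        pair_of (hXS hxX) (hYS hy) fun h => disjoint_left.mp hdisj (h ▸ hy) hxZ
      exact ⟨R, hRS, hR, ⟨x, mem_inter.mpr ⟨hxX, hxR⟩⟩, ⟨y, mem_inter.mpr ⟨hy, hyR⟩⟩,
        ⟨x, mem_inter.mpr ⟨hxZ, hxR⟩⟩⟩

theorem mem_or_mem_of_pair_inter_nonempty {R : Finset α} {a b : α}
    (hR : (({a, b} : Finset α) ∩ R).Nonempty) {p : α × α} (hp : p = (a, b) ∨ p = (b, a)) :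
    p.1 ∈ R ∨ p.2 ∈ R := by
  obtain ⟨y, hy⟩ := hR
  simp only [mem_inter, mem_insert, mem_singleton] at hy
  rcases hy with ⟨rfl | rfl, hyR⟩ <;> rcases hp with rfl | rfl <;> simp [hyR]

theorem exists_pair_meets_of_card_le_four {B : Finset α} {F : Finset (α × α)}
    (hBS : B ⊆ S) (hB : 2 ≤ B.card) (hcard : S.card < B.card + 4)
    (hFS : F ⊆ S.offDiag) (hswap : ∀ p ∈ F, p.swap ∈ F) (hF : F.card ≤ 4) :
    ∃ R ⊆ S, R.card = 2 ∧ (B ∩ R).Nonempty ∧ ∀ p ∈ F, p.1 ∈ R ∨ p.2 ∈ R := by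
  have hB0 : B.Nonempty := card_pos.mp (by omega)
  rcases F.eq_empty_or_nonempty with rfl | ⟨⟨a, b⟩, hab⟩
  · obtain ⟨R, hRS, hR, hBR, -⟩ := exists_pair_meets_three hBS hBS hBS hB hB0 hB0 (by omega)
    exact ⟨R, hRS, hR, hBR, by simp⟩
  obtain ⟨ha, hb, hne⟩ := mem_offDiag.mp (hFS hab)
  have hE : ({a, b} : Finset α) ⊆ S := by simp [insert_subset_iff, ha, hb]
  have hE2 : ({a, b} : Finset α).card = 2 := card_pair hne
  by_cases hone : ∀ p ∈ F, p = (a, b) ∨ p = (b, a)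
  · obtain ⟨R, hRS, hR, hBR, hER, -⟩ :=
      exists_pair_meets_three hBS hE hE hB (insert_nonempty _ _) (insert_nonempty _ _) (by omega)
    exact ⟨R, hRS, hR, hBR, fun p hp => mem_or_mem_of_pair_inter_nonempty hER (hone p hp)⟩
  push Not at hone
  obtain ⟨⟨a', b'⟩, hab', hne₁, hne₂⟩ := hone
  obtain ⟨ha', hb', hne'⟩ := mem_offDiag.mp (hFS hab')
  have hE' : ({a', b'} : Finset α) ⊆ S := by simp [insert_subset_iff, ha', hb']
  have hfour : F = {(a, b), (b, a), (a', b'), (b', a')} := by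
    have hcard4 : ({(a, b), (b, a), (a', b'), (b', a')} : Finset (α × α)).card = 4 := by
      simp only [ne_eq, Prod.ext_iff] at hne hne' hne₁ hne₂
      rw [card_insert_of_notMem, card_insert_of_notMem, card_pair] <;>
        simp only [mem_insert, mem_singleton, ne_eq, Prod.ext_iff] <;> tauto
    refine (eq_of_subset_of_card_le ?_ (by omega)).symm
    simpa [insert_subset_iff, hab, hab'] using ⟨hswap _ hab, hswap _ hab'⟩
  obtain ⟨R, hRS, hR, hBR, hER, hER'⟩ :=
    exists_pair_meets_three hBS hE hE' hB (insert_nonempty _ _) (insert_nonempty _ _)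
      (by rw [hE2, card_pair hne']; omega)
  refine ⟨R, hRS, hR, hBR, fun p hp => ?_⟩
  rw [hfour] at hp
  simp only [mem_insert, mem_singleton] at hp
  rcases hp with hp | hp | hp | hp
  · exact mem_or_mem_of_pair_inter_nonempty hER (.inl hp)
  · exact mem_or_mem_of_pair_inter_nonempty hER (.inr hp)
  · exact mem_or_mem_of_pair_inter_nonempty hER' (.inl hp)
  · exact mem_or_mem_of_pair_inter_nonempty hER' (.inr hp)

end Transversal

section

variable [DecidableEq V]

theorem chkDeg_sdiff_add_chkDeg {S R : Finset V} (hRS : R ⊆ S) (c : C) :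
    chkDeg N (S \ R) c + chkDeg N R c = chkDeg N S c := by
  rw [chkDeg, chkDeg, chkDeg, ← card_union_of_disjoint (disjoint_filter_filter sdiff_disjoint),
    ← filter_union, sdiff_union_of_subset hRS]

theorem chkDeg_pos_of_inter_nonempty {S R : Finset V} {c : C}
    (h : ((S.filter fun v => c ∈ N v) ∩ R).Nonempty) : 0 < chkDeg N R c := by
  obtain ⟨v, hv⟩ := h
  rw [mem_inter, mem_filter] at hv
  exact chkDeg_pos hv.2 hv.1.2

theorem card_filter_even_eq {T : Finset V}
    (hcov : ∀ v ∈ T, ∀ w ∈ T, v ≠ w → (N v ∩ N w).card = 1)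
    (hdeg : ∀ c ∈ T.biUnion N, chkDeg N T c ≤ 2) {v : V} (hv : v ∈ T) :
    ((N v).filter fun c => chkDeg N T c % 2 = 0).card = T.card - 1 := by
  have hpairs : ∑ c ∈ N v, chkDeg N T c = (N v).card + (T.card - 1) := by
    rw [sum_chkDeg_eq_sum_card_inter, ← add_sum_erase _ _ hv, inter_self,
      sum_congr rfl fun w hw => hcov v hv w (mem_of_mem_erase hw) (ne_of_mem_erase hw).symm,
      sum_const, smul_eq_mul, mul_one, card_erase_of_mem hv]
  have hchecks : ∑ c ∈ N v, chkDeg N T c =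
      (N v).card + ((N v).filter fun c => chkDeg N T c % 2 = 0).card := by
    rw [card_eq_sum_ones (N v), card_filter, ← sum_add_distrib]
    refine sum_congr rfl fun c hc => ?_
    have := chkDeg_pos (N := N) (T := T) hv hc
    have := hdeg c (mem_biUnion.mpr ⟨v, hv, hc⟩)
    split_ifs <;> omega
  omega

theorem isAbsorbing_and_card_oddChecks_eq_eight {T : Finset V}
    (hreg : ∀ v ∈ T, (N v).card = 5) (hT : T.card = 4)
    (hcov : ∀ v ∈ T, ∀ w ∈ T, v ≠ w → (N v ∩ N w).card = 1)
    (hdeg : ∀ c ∈ T.biUnion N, chkDeg N T c ≤ 2) :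
    isAbsorbing N T ∧ (oddChecks N T).card = 8 := by
  have hodd : ∀ v ∈ T, ((N v).filter fun c => chkDeg N T c % 2 = 1).card = 2 := by
    intro v hv
    have heven := card_filter_even_eq hcov hdeg hv
    have hsplit := card_filter_add_card_filter_not (s := N v) fun c => chkDeg N T c % 2 = 1
    simp only [Nat.mod_two_ne_one] at hsplit
    have := hreg v hv
    omega
  refine ⟨fun v hv => ?_, ?_⟩
  · rw [hodd v hv, card_filter_even_eq hcov hdeg hv, hT]
    decide
  · rw [card_oddChecks_eq_sum hdeg, sum_congr rfl hodd, sum_const, hT, smul_eq_mul]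

theorem exists_four_eight_of_removal (hreg : ∀ v, (N v).card = 5)
    (hgirth : ∀ v w : V, v ≠ w → (N v ∩ N w).card ≤ 1) {S R : Finset V} (hS : S.card = 6)
    (hRS : R ⊆ S) (hR : R.card = 2)
    (hdeg : ∀ c ∈ S.biUnion N, chkDeg N S c ≤ chkDeg N R c + 2)
    (hunc : ∀ p ∈ uncoveredPairs N S, p.1 ∈ R ∨ p.2 ∈ R) :
    ∃ T ⊆ S, T.card = 4 ∧ isAbsorbing N T ∧ (oddChecks N T).card = 8 := by
  refine ⟨S \ R, sdiff_subset, by rw [card_sdiff_of_subset hRS, hS, hR],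
    isAbsorbing_and_card_oddChecks_eq_eight (fun v _ => hreg v)
      (by rw [card_sdiff_of_subset hRS, hS, hR]) (fun v hv w hw hvw => ?_) fun c hc => ?_⟩
  · rw [mem_sdiff] at hv hw
    have hle := hgirth v w hvw
    by_contra hne
    have hdisj : Disjoint (N v) (N w) := by
      rw [disjoint_iff_inter_eq_empty, ← card_eq_zero]
      omega
    rcases hunc (v, w) (mem_filter.mpr ⟨mem_offDiag.mpr ⟨hv.1, hw.1, hvw⟩, hdisj⟩) with h | h
    exacts [hv.2 h, hw.2 h]
  · have := chkDeg_sdiff_add_chkDeg (N := N) hRS c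
    have := hdeg c (biUnion_subset_biUnion_of_subset_left N sdiff_subset hc)
    omega

variable {S : Finset V}

theorem exists_four_eight_of_chkDeg_eq_four (hreg : ∀ v, (N v).card = 5)
    (hgirth : ∀ v w : V, v ≠ w → (N v ∩ N w).card ≤ 1) (hS : S.card = 6) {b : C}
    (hb : chkDeg N S b = 4) (hrest : ∀ c ∈ S.biUnion N, c ≠ b → chkDeg N S c ≤ 2)
    (hU : (uncoveredPairs N S).card = 0) :
    ∃ T ⊆ S, T.card = 4 ∧ isAbsorbing N T ∧ (oddChecks N T).card = 8 := by
  obtain ⟨R, hRb, hR⟩ := exists_subset_card_eq (s := S.filter fun v => b ∈ N v) (n := 2)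
    (by rw [← chkDeg, hb]; omega)
  have hRS : R ⊆ S := hRb.trans (filter_subset _ _)
  refine exists_four_eight_of_removal hreg hgirth hS hRS hR (fun c hc => ?_)
    (by simp [card_eq_zero.mp hU])
  by_cases hcb : c = b
  · subst hcb
    have : chkDeg N R c = 2 := by
      rw [chkDeg, filter_true_of_mem fun v hv => (mem_filter.mp (hRb hv)).2, hR]
    omega
  · have := hrest c hc hcb
    omega

theorem exists_four_eight_of_chkDeg_eq_three (hreg : ∀ v, (N v).card = 5)
    (hgirth : ∀ v w : V, v ≠ w → (N v ∩ N w).card ≤ 1) (hS : S.card = 6) {b : C}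
    (hb : chkDeg N S b = 3) (hrest : ∀ c ∈ S.biUnion N, c ≠ b → chkDeg N S c ≤ 2)
    (hU : (uncoveredPairs N S).card ≤ 4) :
    ∃ T ⊆ S, T.card = 4 ∧ isAbsorbing N T ∧ (oddChecks N T).card = 8 := by
  have hB : (S.filter fun v => b ∈ N v).card = 3 := hb
  obtain ⟨R, hRS, hR, hbR, hcover⟩ := exists_pair_meets_of_card_le_four
    (B := S.filter fun v => b ∈ N v) (filter_subset _ _) (by omega) (by omega) (filter_subset _ _)
    (fun _ => uncoveredPairs_swap) hU
  refine exists_four_eight_of_removal hreg hgirth hS hRS hR (fun c hc => ?_) hcover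
  by_cases hcb : c = b
  · subst hcb
    have := chkDeg_pos_of_inter_nonempty hbR
    omega
  · have := hrest c hc hcb
    omega

theorem exists_four_eight_of_two_chkDeg_eq_three (hreg : ∀ v, (N v).card = 5)
    (hgirth : ∀ v w : V, v ≠ w → (N v ∩ N w).card ≤ 1) (hS : S.card = 6) {b₁ b₂ : C}
    (hb₁ : chkDeg N S b₁ = 3) (hb₂ : chkDeg N S b₂ = 3)
    (hrest : ∀ c ∈ S.biUnion N, c ≠ b₁ → c ≠ b₂ → chkDeg N S c ≤ 2)
    (hU : (uncoveredPairs N S).card = 0) :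
    ∃ T ⊆ S, T.card = 4 ∧ isAbsorbing N T ∧ (oddChecks N T).card = 8 := by
  have hB₁ : (S.filter fun v => b₁ ∈ N v).card = 3 := hb₁
  have hB₂ : (S.filter fun v => b₂ ∈ N v).card = 3 := hb₂
  have hB₂0 : (S.filter fun v => b₂ ∈ N v).Nonempty := card_pos.mp (by omega)
  obtain ⟨R, hRS, hR, hb₁R, hb₂R, -⟩ := exists_pair_meets_three
    (X := S.filter fun v => b₁ ∈ N v) (filter_subset _ _) (filter_subset _ _) (filter_subset _ _)
    (by omega) hB₂0 hB₂0 (by omega)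
  refine exists_four_eight_of_removal hreg hgirth hS hRS hR (fun c hc => ?_)
    (by simp [card_eq_zero.mp hU])
  by_cases hcb₁ : c = b₁
  · subst hcb₁
    have := chkDeg_pos_of_inter_nonempty hb₁R
    omega
  by_cases hcb₂ : c = b₂
  · subst hcb₂
    have := chkDeg_pos_of_inter_nonempty hb₂R
    omega
  have := hrest c hc hcb₁ hcb₂
  omega

end

end AbsorbingSet

open AbsorbingSet in
theorem six_eight_highdeg_contains_48_general {V C : Type*} [DecidableEq V] [DecidableEq C]
    (N : V → Finset C)
    (hreg : ∀ v, (N v).card = 5)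
    (hgirth : ∀ v w : V, v ≠ w → (N v ∩ N w).card ≤ 1)
    (S : Finset V) (hS : S.card = 6)
    (hodd : (oddChecks N S).card = 8)
    (hc : ∃ c ∈ S.biUnion N, 2 < chkDeg N S c) :
    ∃ T ⊆ S, T.card = 4 ∧ isAbsorbing N T ∧ (oddChecks N T).card = 8 := by
  obtain ⟨c₀, hc₀S, hc₀⟩ := hc
  have hsum : ∑ c ∈ S.biUnion N, excess (chkDeg N S c) + (uncoveredPairs N S).card = 8 := by
    have := sum_excess_add_card_uncoveredPairs (S := S) (fun v _ => hreg v) hgirth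
    rw [hS, hodd] at this
    omega
  rcases high_degree_cases hsum hc₀S hc₀ with ⟨h₀, hU, hrest⟩ | ⟨h₀, hU, hrest⟩ |
    ⟨c₁, h₀, h₁, hU, hrest⟩
  · exact exists_four_eight_of_chkDeg_eq_four hreg hgirth hS h₀ hrest hU
  · exact exists_four_eight_of_chkDeg_eq_three hreg hgirth hS h₀ hrest hU.le
  · exact exists_four_eight_of_two_chkDeg_eq_three hreg hgirth hS h₀ h₁ hrest hU

/-- In an `r = 5` regular code of girth 6, any (6,8) absorbing set containing a
check node of degree greater than 2 (within the absorbing set) must contain a (4,8) absorbing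
set as a subgraph. -/
theorem six_eight_highdeg_contains_48 {V C : Type*} [DecidableEq V] [DecidableEq C]
    (N : V → Finset C)
    (hreg : ∀ v, (N v).card = 5)
    (hgirth : ∀ v w : V, v ≠ w → (N v ∩ N w).card ≤ 1)
    (S : Finset V) (hS : S.card = 6) (habs : isAbsorbing N S)
    (hodd : (oddChecks N S).card = 8)
    (hc : ∃ c ∈ S.biUnion N, 2 < chkDeg N S c) :
    ∃ T ⊆ S, T.card = 4 ∧ isAbsorbing N T ∧ (oddChecks N T).card = 8 :=
  six_eight_highdeg_contains_48_general N hreg hgirth S hS hodd hc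
end

section
/- Let p be a prime with p ≡ 1 (mod 4) and let a ∈ GF(p)* have multiplicative order 4. Setting x=1, w=a, y=a², z=a³, the quantity (z-x)(w-y) + (z-y)(w-x) = 2(1-a)(1+a²) ≡ 0 (mod p), since a² = -1. Hence the r=4 Tanner-construction row selection g_r(i) = a^i always admits a singular (4,4) absorbing-set CCM, so (4,4) absorbing sets exist in these codes. -/
/-- Let `p ≡ 1 (mod 4)` be prime and `a ∈ GF(p)*` have multiplicative order 4.
With `x = 1, w = a, y = a², z = a³`, we get `a² = -1` and
`(z-x)(w-y) + (z-y)(w-x) = 2(1-a)(1+a²) = 0 (mod p)`; hence the `r = 4` Tanner-construction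
row selection `g_r(i) = a^i` always admits a singular (4,4) absorbing-set CCM. -/
theorem tanner_r4_44_ccm_singular (p : ℕ) [Fact p.Prime] (hp4 : p % 4 = 1)
    (a : (ZMod p)ˣ) (ha : orderOf a = 4) (b : ZMod p) (hb : b = (a : ZMod p)) :
    b ^ 2 = -1 ∧
    (b ^ 3 - 1) * (b - b ^ 2) + (b ^ 3 - b ^ 2) * (b - 1) = 2 * (1 - b) * (1 + b ^ 2) ∧
    (b ^ 3 - 1) * (b - b ^ 2) + (b ^ 3 - b ^ 2) * (b - 1) = 0 := by
  have h4 : a ^ 4 = 1 := by rw [← ha]; exact pow_orderOf_eq_one a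
  have h2 : a ^ 2 ≠ 1 := by
    intro h
    have := orderOf_dvd_of_pow_eq_one h
    rw [ha] at this
    omega
  have hb4 : b ^ 4 = 1 := by
    rw [hb, ← Units.val_pow_eq_pow_val, h4, Units.val_one]
  have hb2 : b ^ 2 ≠ 1 := by
    rw [hb, ← Units.val_pow_eq_pow_val]
    intro h
    exact h2 (Units.ext (by simpa using h))
  have key : b ^ 2 = -1 := by
    have : (b ^ 2 - 1) * (b ^ 2 + 1) = 0 := by ring_nf; linear_combination hb4 - 1
    rcases mul_eq_zero.mp this with h | h
    · exact absurd (sub_eq_zero.mp h) hb2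
    · exact eq_neg_of_add_eq_zero_left h
  refine ⟨key, by linear_combination (2 - b) * hb4, ?_⟩
  linear_combination (2 - b) * hb4 + (2 - 2 * b) * key
end

section
/- Let M be a 6×5 matrix over GF(p) of the block form whose first three rows form an invertible-or-singular 3×3 block A in the first three columns (with zeros elsewhere in those rows), and whose rows 4–6 have the stated nonzero pattern of the (6,8) configuration-4 CCM. If the top-left 3×3 submatrix A (equal to the (4,8) absorbing set CCM) satisfies det A ≢ 0 (mod p), then M has trivial null space restricted to consistent solutions; consequently an SR-SCB code whose RSF precludes all (4,8) absorbing sets also precludes every (6,8) absorbing set whose VN graph contains the (4,8) VN graph K4 as a subgraph. -/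
/-- Let the 6×5 CCM of the (6,8) configuration-4 absorbing set be in block
lower-triangular form `fromBlocks M1 0 A B` with `M1` the 3×3 CCM of the contained (4,8)
absorbing set. If `det M1 ≢ 0 (mod p)`, then any null vector `u` must vanish on the first
block, so there is no consistent (everywhere nonzero) solution; hence an SR-SCB code whose
RSF precludes all (4,8) absorbing sets also precludes every (6,8) absorbing set whose VN
graph contains `K4`. -/
theorem ccm68_block_no_consistent_null (p : ℕ) [Fact p.Prime]
    (M1 : Matrix (Fin 3) (Fin 3) (ZMod p))
    (A : Matrix (Fin 3) (Fin 3) (ZMod p))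
    (B : Matrix (Fin 3) (Fin 2) (ZMod p))
    (hdet : M1.det ≠ 0)
    (u : Fin 3 ⊕ Fin 2 → ZMod p)
    (hu : (Matrix.fromBlocks M1 0 A B).mulVec u = 0) :
    (∀ i, u (Sum.inl i) = 0) ∧ ¬ (∀ x, u x ≠ 0) := by
  have hrepr : u = Sum.elim (u ∘ Sum.inl) (u ∘ Sum.inr) := by
    funext x; cases x <;> rfl
  rw [hrepr, Matrix.fromBlocks_mulVec] at hu
  have htop : M1.mulVec (u ∘ Sum.inl) = 0 := by
    have := congrFun hu
    funext i
    simpa [Matrix.zero_mulVec] using this (Sum.inl i)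
  have hinv : IsUnit M1.det := isUnit_iff_ne_zero.mpr hdet
  have hv : (u ∘ Sum.inl) = 0 := by
    have := congrArg (M1⁻¹.mulVec) htop
    rwa [Matrix.mulVec_mulVec, Matrix.nonsing_inv_mul M1 hinv, Matrix.one_mulVec,
      Matrix.mulVec_zero] at this
  refine ⟨fun i => congrFun hv i, fun h => h (Sum.inl 0) (congrFun hv 0)⟩
end
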